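/- Let m ≥ n ≥ 2 and let G be the ordered graph on vertices v_1, ..., v_{m+n} whose only edges are v_1 v_{m+1} and v_m v_{m+n}. Then every 2-coloring of the edges of the complete graph on the linearly ordered vertex set {1, ..., 2m+n-1} contains a monochromatic ordered copy of G. -/

import Mathlib

/-! Two edges `pq` and `rs` of the complete graph with `p + (m - 1) ≤ r < q` and `q + (n - 1) ≤ s`
extend to an ordered copy of `G`, so they must not share a color. On the vertices
`0, m - 1, m, 2m - 2, 2m - 1, 2m + n - 2` (0-indexed) the edges
`(0, m), (m - 1, 2m - 1), (2m - 2, 2m + n - 2), (0, 2m - 1), (m - 1, 2m + n - 2)`, taken cyclically,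
are pairwise in this position. They form a 5-cycle, and an odd cycle admits no proper
2-coloring. -/

/-- A `t`-edge-coloring `c` of the complete graph on the ordered vertex set `Fin N`
contains a monochromatic ordered copy of the ordered graph `G` on `Fin M`. -/
def HasMonoCopy {M N t : ℕ} (G : SimpleGraph (Fin M)) (c : Fin N → Fin N → Fin t) : Prop :=
  ∃ k : Fin t, ∃ f : Fin M → Fin N, StrictMono f ∧
    ∀ u v : Fin M, u < v → G.Adj u v → c (f u) (f v) = k

/-- The `t`-color ordered Ramsey number of the ordered graph `G`: the least `N` such that
every `t`-coloring of the edges of the complete graph on `Fin N` contains a monochromatic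
ordered copy of `G`. -/
noncomputable def orderedRamsey {M : ℕ} (t : ℕ) (G : SimpleGraph (Fin M)) : ℕ :=
  sInf {N : ℕ | ∀ c : Fin N → Fin N → Fin t, HasMonoCopy G c}

/-- An interval coloring of an ordered graph with `k` parts, encoded as a monotone
surjection onto `Fin k` whose fibers (the parts, which are intervals of consecutive
vertices) are independent sets. -/
def IsIntervalColoring {N k : ℕ} (G : SimpleGraph (Fin N)) (p : Fin N → Fin k) : Prop :=
  Monotone p ∧ Function.Surjective p ∧ ∀ u v : Fin N, G.Adj u v → p u ≠ p v

/-- The interval chromatic number of an ordered graph. -/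
noncomputable def intervalChromatic {N : ℕ} (G : SimpleGraph (Fin N)) : ℕ :=
  sInf {k : ℕ | ∃ p : Fin N → Fin k, IsIntervalColoring G p}

lemma hasMonoCopy_fromEdgeSet_pair {M N t : ℕ} {c : Fin N → Fin N → Fin t} {a b a' b' : Fin M}
    (hab : a < b) (hab' : a' < b') {f : Fin M → Fin N} (hf : StrictMono f)
    (hc : c (f a) (f b) = c (f a') (f b')) :
    HasMonoCopy (SimpleGraph.fromEdgeSet {s(a, b), s(a', b')}) c := by
  refine ⟨c (f a) (f b), f, hf, fun u v huv hadj => ?_⟩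
  have hedge : s(u, v) = s(a, b) ∨ s(u, v) = s(a', b') := by simpa using hadj.1
  rcases hedge with h | h <;> rcases Sym2.eq_iff.1 h with ⟨rfl, rfl⟩ | ⟨rfl, rfl⟩
  · rfl
  · exact absurd (huv.trans hab) (lt_irrefl u)
  · exact hc.symm
  · exact absurd (huv.trans hab') (lt_irrefl u)

lemma exists_strictMono_fin_add {m n N : ℕ} (hm : 2 ≤ m) (hn : 2 ≤ n) {p r q s : Fin N}
    (hpr : (p : ℕ) + (m - 1) ≤ r) (hrq : (r : ℕ) < q) (hqs : (q : ℕ) + (n - 1) ≤ s) :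
    ∃ f : Fin (m + n) → Fin N, StrictMono f ∧
      f ⟨0, by omega⟩ = p ∧ f ⟨m - 1, by omega⟩ = r ∧
      f ⟨m, by omega⟩ = q ∧ f ⟨m + n - 1, by omega⟩ = s := by
  refine ⟨fun i => ⟨if i.val + 1 < m then p + i.val
      else if i.val + 1 = m then r
      else if i.val + 1 < m + n then q + (i.val - m) else s,
      by have := i.isLt; have := s.isLt; split_ifs <;> omega⟩, ?_, ?_, ?_, ?_, ?_⟩
  · intro i j hij
    have hij' : i.val < j.val := hij
    simp only [Fin.lt_def]
    split_ifs <;> omega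
  all_goals ext; simp only; split_ifs <;> omega

lemma hasMonoCopy_of_color_eq {m n N t : ℕ} (hm : 2 ≤ m) (hn : 2 ≤ n)
    {c : Fin N → Fin N → Fin t} {p r q s : Fin N}
    (hpr : (p : ℕ) + (m - 1) ≤ r) (hrq : (r : ℕ) < q) (hqs : (q : ℕ) + (n - 1) ≤ s)
    (hc : c p q = c r s) :
    HasMonoCopy (SimpleGraph.fromEdgeSet
      {s((⟨0, by omega⟩ : Fin (m + n)), (⟨m, by omega⟩ : Fin (m + n))),
       s((⟨m - 1, by omega⟩ : Fin (m + n)), (⟨m + n - 1, by omega⟩ : Fin (m + n)))}) c := by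
  obtain ⟨f, hf, hp, hr, hq, hs⟩ := exists_strictMono_fin_add hm hn hpr hrq hqs
  exact hasMonoCopy_fromEdgeSet_pair (Fin.mk_lt_mk.2 (by omega)) (Fin.mk_lt_mk.2 (by omega)) hf
    (by rw [hp, hq, hr, hs, hc])

lemma fin_two_eq_or_eq_of_five_cycle (x₀ x₁ x₂ x₃ x₄ : Fin 2) :
    x₀ = x₁ ∨ x₁ = x₂ ∨ x₂ = x₃ ∨ x₃ = x₄ ∨ x₄ = x₀ := by
  revert x₀ x₁ x₂ x₃ x₄; decide

/-- Let `m ≥ n ≥ 2` and let `G` be the ordered graph on `v_1,…,v_{m+n}` whose only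
edges are `v_1 v_{m+1}` and `v_m v_{m+n}`. Then every 2-coloring of the edges of the
complete graph on the ordered vertex set `{1,…,2m+n-1}` contains a monochromatic
ordered copy of `G`. -/
theorem stmt7 {m n : ℕ} (hn : 2 ≤ n) (hnm : n ≤ m)
    (G : SimpleGraph (Fin (m + n)))
    (hG : G = SimpleGraph.fromEdgeSet
      {s((⟨0, by omega⟩ : Fin (m + n)), (⟨m, by omega⟩ : Fin (m + n))),
       s((⟨m - 1, by omega⟩ : Fin (m + n)), (⟨m + n - 1, by omega⟩ : Fin (m + n)))}) :
    ∀ c : Fin (2 * m + n - 1) → Fin (2 * m + n - 1) → Fin 2,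
      HasMonoCopy G c := by
  intro c
  have hm : 2 ≤ m := hn.trans hnm
  subst hG
  rcases fin_two_eq_or_eq_of_five_cycle (c ⟨0, by omega⟩ ⟨m, by omega⟩)
      (c ⟨m - 1, by omega⟩ ⟨2 * m - 1, by omega⟩)
      (c ⟨2 * m - 2, by omega⟩ ⟨2 * m + n - 2, by omega⟩)
      (c ⟨0, by omega⟩ ⟨2 * m - 1, by omega⟩)
      (c ⟨m - 1, by omega⟩ ⟨2 * m + n - 2, by omega⟩) with h | h | h | h | h <;>
    first
    | exact hasMonoCopy_of_color_eq hm hn (by simp only; omega) (by simp only; omega)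
        (by simp only; omega) h
    | exact hasMonoCopy_of_color_eq hm hn (by simp only; omega) (by simp only; omega)
        (by simp only; omega) h.symm
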